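/- In the incremental reachability tree algorithm, after processing any sequence of edge insertions starting from the single-vertex tree {s}, a vertex u belongs to the maintained tree T if and only if u is reachable from s in the current graph. -/

import Mathlib

open Finset

variable {V : Type} [Fintype V] [DecidableEq V]

open scoped Classical in
/-- One step of Italiano's incremental reachability algorithm: insert the edge, and if its
tail is in the tree and its head is not, add to the tree everything the recursive scan
discovers, i.e. all vertices reachable from the head in the new graph. -/
noncomputable def italianoStep : (Finset (V × V) × Set V) → (V × V) → (Finset (V × V) × Set V) :=
  fun p e =>
    (insert e p.1,
      if e.1 ∈ p.2 then
        p.2 ∪ {x | Relation.ReflTransGen (fun a b => (a, b) ∈ insert e p.1) e.2 x}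
      else p.2)

/-!
When an edge `(a, b)` is inserted, a path from `s` in the new graph either avoids the new
edge, or its part before the first use of the edge is an old path to `a`; so the reachable
set grows exactly when `a` was already reachable, and then by what is reachable from `b`,
which is what the recursive scan adds. Hence the tree stays the reachable set by induction.
-/

open Relation

section Reachability

variable {α : Type}

def reachableFrom (E : Finset (α × α)) (s : α) : Set α :=
  {x | ReflTransGen (fun a b => (a, b) ∈ E) s x}

@[simp]
theorem reachableFrom_empty (s : α) : reachableFrom (∅ : Finset (α × α)) s = {s} := by
  ext x
  simp [reachableFrom, reflTransGen_iff_eq]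

variable [DecidableEq α]

theorem reflTransGen_insert_iff {E : Finset (α × α)} {e : α × α} {s x : α} :
    ReflTransGen (fun a b => (a, b) ∈ insert e E) s x ↔
      ReflTransGen (fun a b => (a, b) ∈ E) s x ∨
        ReflTransGen (fun a b => (a, b) ∈ E) s e.1 ∧
          ReflTransGen (fun a b => (a, b) ∈ insert e E) e.2 x := by
  have hmono {y z : α} (h : ReflTransGen (fun a b => (a, b) ∈ E) y z) :
      ReflTransGen (fun a b => (a, b) ∈ insert e E) y z :=
    ReflTransGen.mono (fun _ _ => mem_insert_of_mem) _ _ h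
  constructor
  · intro h
    induction h with
    | refl => exact .inl .refl
    | tail _ hyz ih =>
      rcases mem_insert.mp hyz with rfl | hE
      · exact .inr ⟨ih.elim id And.left, .refl⟩
      · exact ih.imp (·.tail hE) fun ⟨ha, hb⟩ => ⟨ha, hb.tail (mem_insert_of_mem hE)⟩
  · rintro (h | ⟨ha, hb⟩)
    · exact hmono h
    · exact ((hmono ha).tail (mem_insert_self e E)).trans hb

theorem italianoStep_reachableFrom (s : α) (E : Finset (α × α)) (e : α × α) :
    italianoStep (E, reachableFrom E s) e = (insert e E, reachableFrom (insert e E) s) := by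
  ext x
  · rfl
  · dsimp only [italianoStep]
    split_ifs with ha
    · exact (or_congr_right (and_iff_right ha).symm).trans reflTransGen_insert_iff.symm
    · exact (or_iff_left (ha ·.1)).symm.trans reflTransGen_insert_iff.symm

theorem foldl_italianoStep_reachableFrom (s : α) (ops : List (α × α)) (E : Finset (α × α)) :
    ops.foldl italianoStep (E, reachableFrom E s) =
      (ops.foldl (fun E e => insert e E) E,
        reachableFrom (ops.foldl (fun E e => insert e E) E) s) := by
  induction ops generalizing E with
  | nil => rfl
  | cons e ops ih => simp only [List.foldl_cons, italianoStep_reachableFrom, ih]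

end Reachability

theorem italiano_tree_eq_reachable (s : V) (ops : List (V × V)) :
    ∀ u : V, u ∈ (ops.foldl italianoStep (∅, ({s} : Set V))).2 ↔
      Relation.ReflTransGen
        (fun a b => (a, b) ∈ (ops.foldl italianoStep (∅, ({s} : Set V))).1) s u := by
  rw [← reachableFrom_empty s, foldl_italianoStep_reachableFrom]
  exact fun _ => Iff.rfl
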